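/- Let R = ((ℓ_1,…,ℓ_d),(u_1,…,u_{d+1})) be a constructible special point data of level d with q nodes, with u_1, …, u_{d+1} listed in increasing lexicographic order, and let c be a rational number. Define b_j := ⌈(|a_{u_j}(R)| + c)/q − 1/2⌉ for j = 1,…,d+1. Then for every node label ℓ ∈ {1,…,q} and all j₁, j₂ ∈ {1,…,d+1} one has |(a^ℓ_{u_{j₁}}(R) − b_{j₁}) − (a^ℓ_{u_{j₂}}(R) − b_{j₂})| ≤ 1. -/

import Mathlib

/-- The relation `u <_ℓ u'` on `{1,2}^d`, relative to node labels `lab : Fin d → ℕ`. -/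
def ltNode {d : ℕ} (lab : Fin d → ℕ) (ℓ : ℕ) (u u' : Fin d → ℕ) : Prop :=
  (∃ k₀ : Fin d, lab k₀ = ℓ ∧ u k₀ = 2 ∧ u' k₀ = 1 ∧
      ∀ k : Fin d, k₀ < k → lab k = ℓ → u k = u' k) ∨
  ((∀ k : Fin d, lab k = ℓ → u k = u' k) ∧
    ∃ k₀ : Fin d, lab k₀ ≠ ℓ ∧ u k₀ = 1 ∧ u' k₀ = 2 ∧
      ∀ k : Fin d, k < k₀ → u k = u' k)

/-- Constructible special point data of level `d` with `q` nodes. -/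
inductive Constructible (q : ℕ) :
    (d : ℕ) → (Fin d → ℕ) → (Fin (d + 1) → Fin d → ℕ) → Prop
  | base (ℓ : ℕ) (h1 : 1 ≤ ℓ) (hq : ℓ ≤ q) :
      Constructible q 1 (fun _ => ℓ) ![![1], ![2]]
  | step {d : ℕ} {lab : Fin d → ℕ} {u : Fin (d + 1) → Fin d → ℕ}
      (hR : Constructible q d lab u) (ℓ : ℕ) (h1 : 1 ≤ ℓ) (hq : ℓ ≤ q)
      (v : Fin (d + 1) → Fin d → ℕ) (σ : Equiv.Perm (Fin (d + 1)))
      (hv : ∀ j, v j = u (σ j))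
      (hsort : ∀ i j : Fin (d + 1), i < j → ltNode lab ℓ (v i) (v j))
      (h : ℕ) (hh1 : 1 ≤ h) (hh2 : h ≤ d + 1) :
      Constructible q (d + 1) (Fin.snoc lab ℓ)
        (fun j : Fin (d + 2) =>
          if hj : (j : ℕ) < h then Fin.snoc (v ⟨(j : ℕ), by omega⟩) 1
          else Fin.snoc (v ⟨(j : ℕ) - 1, by omega⟩) 2)

/-- `a^ℓ_u(R)`: the number of `k` with `ℓ_k = ℓ` and `u(k) = 2`. -/
def aCount {d : ℕ} (lab : Fin d → ℕ) (ℓ : ℕ) (u : Fin d → ℕ) : ℕ :=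
  (Finset.univ.filter (fun k : Fin d => lab k = ℓ ∧ u k = 2)).card

/-- `|a_u(R)|`: the number of `k` with `u(k) = 2`. -/
def aTot {d : ℕ} (u : Fin d → ℕ) : ℕ :=
  (Finset.univ.filter (fun k : Fin d => u k = 2)).card

/-- Lexicographic order on tuples, comparing at the smallest coordinate where they differ. -/
def lexLt {d : ℕ} (u u' : Fin d → ℕ) : Prop :=
  ∃ k₀ : Fin d, (∀ k : Fin d, k < k₀ → u k = u' k) ∧ u k₀ < u' k₀

/-!
Write `a(x) = (a^ℓ_x)_ℓ` for the count vector of a tuple `x`. Along the construction the tuples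
keep the properties collected in `CountInvariant`: their count vectors form a chain for the
coordinatewise order, any two differ by at most one in each coordinate, and each order `<_ℓ`
lists them by decreasing `a^ℓ`, ties being listed by increasing `|a|` (and in the same way by
every `<_ℓ'` with `a^ℓ'` also tied). Appending a coordinate labelled `ℓ` adds `1` to `a^ℓ` on a
final segment of the `<_ℓ`-sorted list; the way `<_ℓ` sorts the old vectors is what makes the
new ones again a chain of this kind.

Consequently, if `|a_x| ≤ |a_y|` then `a^ℓ_x ≤ a^ℓ_y ≤ a^ℓ_x + 1` and `|a_y| ≤ |a_x| + q`, so that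
also `b_y - b_x ∈ {0, 1}`; the two differences `a^ℓ - b` therefore differ by at most one.
-/

lemma aCount_snoc {d : ℕ} (lab : Fin d → ℕ) (ℓ ℓ' : ℕ) (x : Fin d → ℕ) (e : ℕ) :
    aCount (Fin.snoc lab ℓ) ℓ' (Fin.snoc x e) =
      aCount lab ℓ' x + if ℓ = ℓ' ∧ e = 2 then 1 else 0 := by
  simp only [aCount, Finset.card_filter, Fin.sum_univ_castSucc]
  simp

lemma aTot_snoc {d : ℕ} (x : Fin d → ℕ) (e : ℕ) :
    aTot (Fin.snoc x e) = aTot x + if e = 2 then 1 else 0 := by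
  simp only [aTot, Finset.card_filter, Fin.sum_univ_castSucc]
  simp

lemma exists_aCount_snoc_eq_add {d : ℕ} (lab : Fin d → ℕ) {ℓ ℓ' e f : ℕ}
    (hef : ℓ = ℓ' → e = f) (x y : Fin d → ℕ) : ∃ δ,
      aCount (Fin.snoc lab ℓ) ℓ' (Fin.snoc x e) = aCount lab ℓ' x + δ ∧
      aCount (Fin.snoc lab ℓ) ℓ' (Fin.snoc y f) = aCount lab ℓ' y + δ := by
  by_cases hℓ : ℓ = ℓ'
  · exact ⟨_, aCount_snoc .., by rw [aCount_snoc, hef hℓ]⟩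
  · exact ⟨0, by simp [aCount_snoc, hℓ]⟩

lemma aTot_eq_sum_aCount {d : ℕ} {lab : Fin d → ℕ} {s : Finset ℕ} (hs : ∀ k, lab k ∈ s)
    (x : Fin d → ℕ) : aTot x = ∑ ℓ ∈ s, aCount lab ℓ x := by
  simp only [aTot, aCount, Finset.card_filter]
  rw [Finset.sum_comm]
  refine Finset.sum_congr rfl fun k _ => ?_
  by_cases hx : x k = 2 <;> simp [hx, hs k]

lemma ltNode_irrefl {d : ℕ} (lab : Fin d → ℕ) (ℓ : ℕ) (x : Fin d → ℕ) :
    ¬ ltNode lab ℓ x x := by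
  rintro (⟨k₀, -, h2, h1, -⟩ | ⟨-, k₀, -, h1, h2, -⟩) <;> omega

lemma ltNode_snoc {d : ℕ} {lab : Fin d → ℕ} {ℓ ℓ' : ℕ} {x y : Fin d → ℕ} {e f : ℕ}
    (H : ltNode (Fin.snoc lab ℓ) ℓ' (Fin.snoc x e) (Fin.snoc y f)) :
    (ℓ = ℓ' ∧ e = 2 ∧ f = 1) ∨ (ℓ ≠ ℓ' ∧ x = y ∧ e = 1 ∧ f = 2) ∨
      ((ℓ = ℓ' → e = f) ∧ ltNode lab ℓ' x y) := by
  simp only [ltNode, Fin.exists_fin_succ', Fin.forall_fin_succ', Fin.snoc_castSucc,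
    Fin.snoc_last, Fin.castSucc_lt_castSucc_iff, Fin.castSucc_lt_last,
    (Fin.castSucc_lt_last _).not_gt, lt_self_iff_false, true_imp_iff, false_imp_iff,
    and_true] at H
  rcases H with (⟨k, hl, hx, hy, hafter, hef⟩ | ⟨hℓ, he, hf, -⟩) |
    ⟨⟨hall, hef⟩, ⟨k, hl, hx, hy, hbefore⟩ | ⟨hℓ, he, hf, hxy⟩⟩
  · exact .inr (.inr ⟨hef, .inl ⟨k, hl, hx, hy, hafter⟩⟩)
  · exact .inl ⟨hℓ, he, hf⟩
  · exact .inr (.inr ⟨hef, .inr ⟨hall, k, hl, hx, hy, hbefore⟩⟩)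
  · exact .inr (.inl ⟨hℓ, funext hxy, he, hf⟩)

def CountLe {d : ℕ} (lab : Fin d → ℕ) (x y : Fin d → ℕ) : Prop :=
  ∀ ℓ, aCount lab ℓ x ≤ aCount lab ℓ y

lemma aTot_lt_of_countLe {d : ℕ} {lab : Fin d → ℕ} {x y : Fin d → ℕ} (hxy : CountLe lab x y)
    {ℓ : ℕ} (hlt : aCount lab ℓ x < aCount lab ℓ y) : aTot x < aTot y := by
  have hs : ∀ k, lab k ∈ insert ℓ (Finset.univ.image lab) := fun k =>
    Finset.mem_insert_of_mem (Finset.mem_image_of_mem lab (Finset.mem_univ k))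
  rw [aTot_eq_sum_aCount hs, aTot_eq_sum_aCount hs]
  exact Finset.sum_lt_sum (fun ℓ' _ => hxy ℓ') ⟨ℓ, Finset.mem_insert_self _ _, hlt⟩

lemma aTot_le_add_card {d : ℕ} {lab : Fin d → ℕ} {s : Finset ℕ} (hs : ∀ k, lab k ∈ s)
    {x y : Fin d → ℕ} (h : ∀ ℓ, aCount lab ℓ y ≤ aCount lab ℓ x + 1) :
    aTot y ≤ aTot x + s.card := by
  rw [aTot_eq_sum_aCount hs, aTot_eq_sum_aCount hs, Finset.card_eq_sum_ones,
    ← Finset.sum_add_distrib]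
  exact Finset.sum_le_sum fun ℓ _ => h ℓ

lemma countLe_snoc {d : ℕ} {lab : Fin d → ℕ} {x y : Fin d → ℕ} (hxy : CountLe lab x y)
    {ℓ e f : ℕ}
    (hℓ : aCount lab ℓ x + (if e = 2 then 1 else 0) ≤ aCount lab ℓ y + if f = 2 then 1 else 0) :
    CountLe (Fin.snoc lab ℓ) (Fin.snoc x e) (Fin.snoc y f) := by
  intro ℓ'
  by_cases h : ℓ = ℓ'
  · subst h
    simpa [aCount_snoc] using hℓ
  · simpa [aCount_snoc, h] using hxy ℓ'

structure CountInvariant {d : ℕ} (lab : Fin d → ℕ) (S : Set (Fin d → ℕ)) : Prop where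
  aCount_le_succ : ∀ x ∈ S, ∀ y ∈ S, ∀ ℓ, aCount lab ℓ y ≤ aCount lab ℓ x + 1
  countLe_total : ∀ x ∈ S, ∀ y ∈ S, CountLe lab x y ∨ CountLe lab y x
  aCount_le_of_ltNode : ∀ x ∈ S, ∀ y ∈ S, ∀ ℓ, ltNode lab ℓ x y →
    aCount lab ℓ y ≤ aCount lab ℓ x
  aTot_le_of_ltNode : ∀ x ∈ S, ∀ y ∈ S, ∀ ℓ, ltNode lab ℓ x y →
    aCount lab ℓ x = aCount lab ℓ y → aTot x ≤ aTot y
  not_ltNode_of_ltNode : ∀ x ∈ S, ∀ y ∈ S, ∀ ℓ ℓ', ltNode lab ℓ x y →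
    aCount lab ℓ x = aCount lab ℓ y → aCount lab ℓ' x = aCount lab ℓ' y → ¬ ltNode lab ℓ' y x

/-- The step with split index `h` keeps `v i · 1` for `i < h` and `v i · 2` for `h ≤ i + 1`
(indices from `0`). -/
def IsSplitEntry (h : ℕ) {n : ℕ} (i : Fin n) (e : ℕ) : Prop :=
  (e = 1 ∧ (i : ℕ) < h) ∨ (e = 2 ∧ h ≤ (i : ℕ) + 1)

lemma IsSplitEntry.le {h n : ℕ} {i₁ i₂ : Fin n} (h₁ : IsSplitEntry h i₁ 2)
    (h₂ : IsSplitEntry h i₂ 1) : i₂ ≤ i₁ := by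
  unfold IsSplitEntry at h₁ h₂
  rw [Fin.le_def]
  omega

lemma IsSplitEntry.eq_one_or_eq_two {h n : ℕ} {i : Fin n} {e : ℕ} (he : IsSplitEntry h i e) :
    e = 1 ∨ e = 2 :=
  he.imp (·.1) (·.1)

namespace CountInvariant

variable {d : ℕ} {lab : Fin d → ℕ} {S : Set (Fin d → ℕ)} {x y : Fin d → ℕ} {ℓ ℓ' ℓ'' e f : ℕ}

lemma mono {T : Set (Fin d → ℕ)} (hI : CountInvariant lab T) (hST : S ⊆ T) :
    CountInvariant lab S where
  aCount_le_succ x hx y hy := hI.aCount_le_succ x (hST hx) y (hST hy)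
  countLe_total x hx y hy := hI.countLe_total x (hST hx) y (hST hy)
  aCount_le_of_ltNode x hx y hy := hI.aCount_le_of_ltNode x (hST hx) y (hST hy)
  aTot_le_of_ltNode x hx y hy := hI.aTot_le_of_ltNode x (hST hx) y (hST hy)
  not_ltNode_of_ltNode x hx y hy := hI.not_ltNode_of_ltNode x (hST hx) y (hST hy)

lemma of_isEmpty [IsEmpty (Fin d)] : CountInvariant lab S := by
  have hlt : ∀ ℓ x y, ¬ ltNode lab ℓ x y := by
    rintro ℓ x y (⟨k, -⟩ | ⟨-, k, -⟩) <;> exact isEmptyElim k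
  refine ⟨?_, ?_, fun x _ y _ ℓ H => (hlt ℓ x y H).elim, fun x _ y _ ℓ H => (hlt ℓ x y H).elim,
    fun x _ y _ ℓ _ H => (hlt ℓ x y H).elim⟩ <;> simp [aCount, CountLe]

lemma countLe_of_aCount_lt (hI : CountInvariant lab S) (hx : x ∈ S) (hy : y ∈ S)
    (h : aCount lab ℓ x < aCount lab ℓ y) : CountLe lab x y :=
  (hI.countLe_total x hx y hy).resolve_right fun hyx => (hyx ℓ).not_gt h

lemma aTot_lt_of_aCount_lt (hI : CountInvariant lab S) (hx : x ∈ S) (hy : y ∈ S)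
    (h : aCount lab ℓ x < aCount lab ℓ y) : aTot x < aTot y :=
  aTot_lt_of_countLe (hI.countLe_of_aCount_lt hx hy h) h

lemma aCount_le_of_aTot_le (hI : CountInvariant lab S) (hx : x ∈ S) (hy : y ∈ S)
    (h : aTot x ≤ aTot y) (ℓ : ℕ) : aCount lab ℓ x ≤ aCount lab ℓ y :=
  not_lt.1 fun hlt => (hI.aTot_lt_of_aCount_lt hy hx hlt).not_ge h

lemma aCount_snoc_le_of_ltNode (hI : CountInvariant lab S) (hx : x ∈ S) (hy : y ∈ S)
    (H : ltNode (Fin.snoc lab ℓ) ℓ' (Fin.snoc x e) (Fin.snoc y f)) :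
    aCount (Fin.snoc lab ℓ) ℓ' (Fin.snoc y f) ≤ aCount (Fin.snoc lab ℓ) ℓ' (Fin.snoc x e) := by
  rcases ltNode_snoc H with ⟨rfl, rfl, rfl⟩ | ⟨hℓ, rfl, -, -⟩ | ⟨hef, hxy⟩
  · simpa [aCount_snoc] using hI.aCount_le_succ x hx y hy ℓ
  · simp [aCount_snoc, hℓ]
  · obtain ⟨δ, hx', hy'⟩ := exists_aCount_snoc_eq_add lab hef x y
    have := hI.aCount_le_of_ltNode x hx y hy ℓ' hxy
    omega

lemma not_ltNode_snoc_of_last_ne (hI : CountInvariant lab S) (hx : x ∈ S) (hy : y ∈ S)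
    (hc : (ℓ = ℓ' ∧ e = 2 ∧ f = 1) ∨ (ℓ ≠ ℓ' ∧ x = y ∧ e = 1 ∧ f = 2))
    (t₁ : aCount (Fin.snoc lab ℓ) ℓ' (Fin.snoc x e) = aCount (Fin.snoc lab ℓ) ℓ' (Fin.snoc y f))
    (t₂ : aCount (Fin.snoc lab ℓ) ℓ'' (Fin.snoc x e) = aCount (Fin.snoc lab ℓ) ℓ'' (Fin.snoc y f)) :
    ¬ ltNode (Fin.snoc lab ℓ) ℓ'' (Fin.snoc y f) (Fin.snoc x e) := by
  intro H
  rcases hc with ⟨rfl, rfl, rfl⟩ | ⟨-, rfl, rfl, rfl⟩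
  · replace t₁ : aCount lab ℓ x + 1 = aCount lab ℓ y := by simpa [aCount_snoc] using t₁
    rcases ltNode_snoc H with ⟨-, h, -⟩ | ⟨-, rfl, -, -⟩ | ⟨hef, hyx⟩
    · omega
    · omega
    · have hℓ : ℓ ≠ ℓ'' := fun h => by simpa using hef h
      simp only [aCount_snoc, hℓ, false_and, if_false] at t₂
      have := hI.aTot_le_of_ltNode y hy x hx ℓ'' hyx t₂.symm
      have := hI.aTot_lt_of_aCount_lt hx hy (ℓ := ℓ) (by omega)
      omega
  · rcases ltNode_snoc H with ⟨rfl, -, -⟩ | ⟨-, -, h, -⟩ | ⟨-, hxx⟩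
    · simp [aCount_snoc] at t₂
    · omega
    · exact ltNode_irrefl _ _ _ hxx

lemma not_ltNode_snoc (hI : CountInvariant lab S) (hx : x ∈ S) (hy : y ∈ S)
    (H : ltNode (Fin.snoc lab ℓ) ℓ' (Fin.snoc x e) (Fin.snoc y f))
    (t₁ : aCount (Fin.snoc lab ℓ) ℓ' (Fin.snoc x e) = aCount (Fin.snoc lab ℓ) ℓ' (Fin.snoc y f))
    (t₂ : aCount (Fin.snoc lab ℓ) ℓ'' (Fin.snoc x e) = aCount (Fin.snoc lab ℓ) ℓ'' (Fin.snoc y f)) :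
    ¬ ltNode (Fin.snoc lab ℓ) ℓ'' (Fin.snoc y f) (Fin.snoc x e) := by
  rcases ltNode_snoc H with hc | hc | ⟨hef, hxy⟩
  · exact hI.not_ltNode_snoc_of_last_ne hx hy (.inl hc) t₁ t₂
  · exact hI.not_ltNode_snoc_of_last_ne hx hy (.inr hc) t₁ t₂
  intro H'
  rcases ltNode_snoc H' with hc | hc | ⟨hef', hyx⟩
  · exact hI.not_ltNode_snoc_of_last_ne hy hx (.inl hc) t₂.symm t₁.symm H
  · exact hI.not_ltNode_snoc_of_last_ne hy hx (.inr hc) t₂.symm t₁.symm H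
  obtain ⟨δ, hx', hy'⟩ := exists_aCount_snoc_eq_add lab hef x y
  obtain ⟨δ', hx'', hy''⟩ := exists_aCount_snoc_eq_add lab (fun h => (hef' h).symm) x y
  exact hI.not_ltNode_of_ltNode x hx y hy ℓ' ℓ'' hxy (by omega) (by omega) hyx

variable {v : Fin (d + 1) → Fin d → ℕ}

lemma aCount_antitone_of_sorted (hI : CountInvariant lab (Set.range v))
    (hsort : ∀ i j, i < j → ltNode lab ℓ (v i) (v j)) {i j : Fin (d + 1)} (hij : i ≤ j) :
    aCount lab ℓ (v j) ≤ aCount lab ℓ (v i) := by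
  rcases hij.eq_or_lt with rfl | hlt
  · exact le_rfl
  · exact hI.aCount_le_of_ltNode _ ⟨i, rfl⟩ _ ⟨j, rfl⟩ ℓ (hsort i j hlt)

lemma countLe_of_sorted (hI : CountInvariant lab (Set.range v))
    (hsort : ∀ i j, i < j → ltNode lab ℓ (v i) (v j)) {i j : Fin (d + 1)} (hij : i ≤ j)
    (heq : aCount lab ℓ (v i) = aCount lab ℓ (v j)) : CountLe lab (v i) (v j) := by
  rcases hij.eq_or_lt with rfl | hlt
  · exact fun _ => le_rfl
  · exact hI.aCount_le_of_aTot_le ⟨i, rfl⟩ ⟨j, rfl⟩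
      (hI.aTot_le_of_ltNode _ ⟨i, rfl⟩ _ ⟨j, rfl⟩ ℓ (hsort i j hlt) heq)

variable {h : ℕ} {i₁ i₂ : Fin (d + 1)} {e₁ e₂ : ℕ}

lemma aCount_snoc_le_succ_of_sorted (hI : CountInvariant lab (Set.range v))
    (hsort : ∀ i j, i < j → ltNode lab ℓ (v i) (v j))
    (h₁ : IsSplitEntry h i₁ e₁) (h₂ : IsSplitEntry h i₂ e₂) (ℓ' : ℕ) :
    aCount (Fin.snoc lab ℓ) ℓ' (Fin.snoc (v i₂) e₂) ≤
      aCount (Fin.snoc lab ℓ) ℓ' (Fin.snoc (v i₁) e₁) + 1 := by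
  have hA := hI.aCount_le_succ _ ⟨i₁, rfl⟩ _ ⟨i₂, rfl⟩ ℓ'
  by_cases hℓ : ℓ = ℓ'
  · subst hℓ
    have hmono : e₁ = 1 → e₂ = 2 → aCount lab ℓ (v i₂) ≤ aCount lab ℓ (v i₁) := by
      rintro rfl rfl
      exact hI.aCount_antitone_of_sorted hsort (h₂.le h₁)
    have := h₁.eq_one_or_eq_two
    have := h₂.eq_one_or_eq_two
    simp only [aCount_snoc, true_and]
    split_ifs <;> omega
  · simpa [aCount_snoc, hℓ] using hA

lemma countLe_total_snoc_of_sorted (hI : CountInvariant lab (Set.range v))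
    (hsort : ∀ i j, i < j → ltNode lab ℓ (v i) (v j))
    (h₁ : IsSplitEntry h i₁ e₁) (h₂ : IsSplitEntry h i₂ e₂) :
    CountLe (Fin.snoc lab ℓ) (Fin.snoc (v i₁) e₁) (Fin.snoc (v i₂) e₂) ∨
      CountLe (Fin.snoc lab ℓ) (Fin.snoc (v i₂) e₂) (Fin.snoc (v i₁) e₁) := by
  wlog hxy : CountLe lab (v i₁) (v i₂) generalizing i₁ i₂ e₁ e₂
  · exact (this h₂ h₁ ((hI.countLe_total _ ⟨i₁, rfl⟩ _ ⟨i₂, rfl⟩).resolve_left hxy)).symm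
  by_cases he : e₁ = 2 ∧ e₂ = 1
  · obtain ⟨rfl, rfl⟩ := he
    have hi := h₁.le h₂
    rcases (hI.aCount_antitone_of_sorted hsort hi).lt_or_eq with hlt | heq
    · exact .inl (countLe_snoc hxy (by simpa using hlt))
    · exact .inr (countLe_snoc (hI.countLe_of_sorted hsort hi heq.symm) (by simp [heq]))
  · have := hxy ℓ
    have := h₁.eq_one_or_eq_two
    have := h₂.eq_one_or_eq_two
    exact .inl (countLe_snoc hxy (by split_ifs <;> omega))

lemma aTot_snoc_le_of_sorted (hI : CountInvariant lab (Set.range v))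
    (hsort : ∀ i j, i < j → ltNode lab ℓ (v i) (v j))
    (h₁ : IsSplitEntry h i₁ e₁) (h₂ : IsSplitEntry h i₂ e₂)
    (H : ltNode (Fin.snoc lab ℓ) ℓ' (Fin.snoc (v i₁) e₁) (Fin.snoc (v i₂) e₂))
    (t : aCount (Fin.snoc lab ℓ) ℓ' (Fin.snoc (v i₁) e₁) =
      aCount (Fin.snoc lab ℓ) ℓ' (Fin.snoc (v i₂) e₂)) :
    aTot (Fin.snoc (v i₁) e₁) ≤ aTot (Fin.snoc (v i₂) e₂) := by
  rw [aTot_snoc, aTot_snoc]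
  rcases ltNode_snoc H with ⟨rfl, rfl, rfl⟩ | ⟨-, hxy, rfl, rfl⟩ | ⟨hef, hxy⟩
  · replace t : aCount lab ℓ (v i₁) + 1 = aCount lab ℓ (v i₂) := by simpa [aCount_snoc] using t
    simpa using hI.aTot_lt_of_aCount_lt ⟨i₁, rfl⟩ ⟨i₂, rfl⟩ (ℓ := ℓ) (by omega)
  · simp [hxy]
  obtain ⟨δ, hx, hy⟩ := exists_aCount_snoc_eq_add lab hef (v i₁) (v i₂)
  have t' : aCount lab ℓ' (v i₁) = aCount lab ℓ' (v i₂) := by omega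
  have hle := hI.aTot_le_of_ltNode _ ⟨i₁, rfl⟩ _ ⟨i₂, rfl⟩ ℓ' hxy t'
  by_cases he : e₁ = 2 ∧ e₂ = 1
  · obtain ⟨rfl, rfl⟩ := he
    have hi := h₁.le h₂
    have hne : i₂ ≠ i₁ := by
      rintro rfl
      exact ltNode_irrefl _ _ _ hxy
    have hlt : aCount lab ℓ (v i₁) < aCount lab ℓ (v i₂) :=
      (hI.aCount_antitone_of_sorted hsort hi).lt_of_ne fun heq =>
        hI.not_ltNode_of_ltNode _ ⟨i₁, rfl⟩ _ ⟨i₂, rfl⟩ ℓ' ℓ hxy t' heq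
          (hsort i₂ i₁ (hi.lt_of_ne hne))
    have := hI.aTot_lt_of_aCount_lt ⟨i₁, rfl⟩ ⟨i₂, rfl⟩ hlt
    simpa using this
  · have := h₁.eq_one_or_eq_two
    have := h₂.eq_one_or_eq_two
    split_ifs <;> omega

theorem snoc_of_sorted (hI : CountInvariant lab (Set.range v))
    (hsort : ∀ i j, i < j → ltNode lab ℓ (v i) (v j)) (h : ℕ) :
    CountInvariant (Fin.snoc lab ℓ) {z | ∃ i e, IsSplitEntry h i e ∧ z = Fin.snoc (v i) e} where
  aCount_le_succ := by
    rintro _ ⟨i₁, e₁, h₁, rfl⟩ _ ⟨i₂, e₂, h₂, rfl⟩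
    exact hI.aCount_snoc_le_succ_of_sorted hsort h₁ h₂
  countLe_total := by
    rintro _ ⟨i₁, e₁, h₁, rfl⟩ _ ⟨i₂, e₂, h₂, rfl⟩
    exact hI.countLe_total_snoc_of_sorted hsort h₁ h₂
  aCount_le_of_ltNode := by
    rintro _ ⟨i₁, e₁, -, rfl⟩ _ ⟨i₂, e₂, -, rfl⟩ ℓ'
    exact hI.aCount_snoc_le_of_ltNode ⟨i₁, rfl⟩ ⟨i₂, rfl⟩
  aTot_le_of_ltNode := by
    rintro _ ⟨i₁, e₁, h₁, rfl⟩ _ ⟨i₂, e₂, h₂, rfl⟩ ℓ'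
    exact hI.aTot_snoc_le_of_sorted hsort h₁ h₂
  not_ltNode_of_ltNode := by
    rintro _ ⟨i₁, e₁, -, rfl⟩ _ ⟨i₂, e₂, -, rfl⟩ ℓ' ℓ''
    exact hI.not_ltNode_snoc ⟨i₁, rfl⟩ ⟨i₂, rfl⟩

end CountInvariant

theorem Constructible.lab_mem {q d : ℕ} {lab : Fin d → ℕ} {u : Fin (d + 1) → Fin d → ℕ}
    (hR : Constructible q d lab u) (k : Fin d) : lab k ∈ Finset.Icc 1 q := by
  induction hR with
  | base ℓ h1 hq => simp [h1, hq]
  | step _ ℓ h1 hq _ _ _ _ _ _ _ ih =>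
    induction k using Fin.lastCases <;> simp [ih, h1, hq]

theorem Constructible.countInvariant {q d : ℕ} {lab : Fin d → ℕ} {u : Fin (d + 1) → Fin d → ℕ}
    (hR : Constructible q d lab u) : CountInvariant lab (Set.range u) := by
  induction hR with
  | base ℓ =>
    -- the base datum is the split at `h = 1` of the single tuple of level `0`
    have hlab : (fun _ => ℓ : Fin 1 → ℕ) = Fin.snoc (Fin.elim0 : Fin 0 → ℕ) ℓ := by
      funext k
      rw [Subsingleton.elim k (Fin.last 0), Fin.snoc_last]
    rw [hlab]
    refine (CountInvariant.of_isEmpty.snoc_of_sorted (v := ![Fin.elim0])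
      (fun i j hij => (hij.ne (Subsingleton.elim (α := Fin 1) i j)).elim) 1).mono ?_
    rintro _ ⟨j, rfl⟩
    fin_cases j
    · exact ⟨0, 1, .inl ⟨rfl, Nat.one_pos⟩, by ext k; fin_cases k; rfl⟩
    · exact ⟨0, 2, .inr ⟨rfl, le_rfl⟩, by ext k; fin_cases k; rfl⟩
  | @step d lab u _ ℓ _ _ v σ hv hsort h _ hh ih =>
    have hrange : Set.range v = Set.range u := by
      rw [show v = u ∘ σ from funext hv]
      exact EquivLike.range_comp u σ
    refine ((hrange ▸ ih).snoc_of_sorted hsort h).mono ?_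
    rintro _ ⟨j, rfl⟩
    by_cases hj : (j : ℕ) < h
    · exact ⟨⟨j, by omega⟩, 1, .inl ⟨rfl, hj⟩, by simp only [dif_pos hj]⟩
    · exact ⟨⟨j - 1, by omega⟩, 2, .inr ⟨rfl, by simp only; omega⟩, by simp only [dif_neg hj]⟩

lemma ceil_div_sub_half_le {q : ℕ} (hq : 1 ≤ q) (c : ℚ) {m n : ℕ} (hmn : m ≤ n)
    (hnm : n ≤ m + q) :
    ⌈((m : ℚ) + c) / q - 1 / 2⌉ ≤ ⌈((n : ℚ) + c) / q - 1 / 2⌉ ∧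
      ⌈((n : ℚ) + c) / q - 1 / 2⌉ ≤ ⌈((m : ℚ) + c) / q - 1 / 2⌉ + 1 := by
  have hq' : (0 : ℚ) < q := by exact_mod_cast hq
  have hmn' : (m : ℚ) ≤ n := by exact_mod_cast hmn
  have hnm' : (n : ℚ) ≤ m + q := by exact_mod_cast hnm
  refine ⟨Int.ceil_mono (by gcongr), ?_⟩
  rw [← Int.ceil_add_one]
  refine Int.ceil_mono ?_
  have : ((n : ℚ) + c) / q ≤ ((m : ℚ) + c) / q + 1 := by
    rw [div_add_one hq'.ne']
    exact div_le_div_of_nonneg_right (by linarith) hq'.le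
  linarith

theorem constructible_ab_diff_general {q d : ℕ} (hq : 1 ≤ q)
    {lab : Fin d → ℕ} {u : Fin (d + 1) → Fin d → ℕ}
    (hR : Constructible q d lab u)
    (c : ℚ) (b : Fin (d + 1) → ℤ)
    (hb : ∀ j : Fin (d + 1), b j = ⌈((aTot (u j) : ℚ) + c) / (q : ℚ) - 1 / 2⌉)
    (ℓ : ℕ) :
    ∀ j₁ j₂ : Fin (d + 1),
      |((aCount lab ℓ (u j₁) : ℤ) - b j₁) - ((aCount lab ℓ (u j₂) : ℤ) - b j₂)| ≤ 1 := by
  intro j₁ j₂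
  wlog hle : aTot (u j₁) ≤ aTot (u j₂) generalizing j₁ j₂
  · rw [abs_sub_comm]
    exact this j₂ j₁ (le_of_not_ge hle)
  have hI := hR.countInvariant
  have hu₁ := Set.mem_range_self (f := u) j₁
  have hu₂ := Set.mem_range_self (f := u) j₂
  have ha₁ := hI.aCount_le_of_aTot_le hu₁ hu₂ hle ℓ
  have ha₂ := hI.aCount_le_succ _ hu₁ _ hu₂ ℓ
  have htot : aTot (u j₂) ≤ aTot (u j₁) + q := by
    simpa using aTot_le_add_card hR.lab_mem (hI.aCount_le_succ _ hu₁ _ hu₂)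
  obtain ⟨hb₁, hb₂⟩ := ceil_div_sub_half_le hq c hle htot
  rw [← hb, ← hb] at hb₁ hb₂
  rw [abs_le]
  omega

/-- For a constructible special point data with tuples listed in increasing lexicographic
order and `b_j = ⌈(|a_{u_j}(R)| + c)/q − 1/2⌉`, one has
`|(a^ℓ_{u_{j₁}}(R) − b_{j₁}) − (a^ℓ_{u_{j₂}}(R) − b_{j₂})| ≤ 1` for every node label
`ℓ ∈ {1,…,q}` and all `j₁, j₂`. -/
theorem constructible_ab_diff {q d : ℕ} (hq : 1 ≤ q) (hd : 1 ≤ d)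
    {lab : Fin d → ℕ} {u : Fin (d + 1) → Fin d → ℕ}
    (hR : Constructible q d lab u)
    (hlex : ∀ i j : Fin (d + 1), i < j → lexLt (u i) (u j))
    (c : ℚ) (b : Fin (d + 1) → ℤ)
    (hb : ∀ j : Fin (d + 1), b j = ⌈((aTot (u j) : ℚ) + c) / (q : ℚ) - 1 / 2⌉)
    (ℓ : ℕ) (hℓ1 : 1 ≤ ℓ) (hℓq : ℓ ≤ q) :
    ∀ j₁ j₂ : Fin (d + 1),
      |((aCount lab ℓ (u j₁) : ℤ) - b j₁) - ((aCount lab ℓ (u j₂) : ℤ) - b j₂)| ≤ 1 :=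
  constructible_ab_diff_general hq hR c b hb ℓ
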